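/- arXiv:1312.1930 — 3 statements merged into one kernel-verified Lean document; each statement's English description precedes it below -/
import Mathlib

section
/- Let z = x + iy ∈ ℍ with y ≥ √3/2. Then |E₂(z) - 1| ≤ 24 e^{-2πy} (1 + 1/(2πy) + 2/(2πy)² + 2/(2πy)³) < 0.14. -/
open Complex Real

/-- The weight 2 Eisenstein series `E₂(z) = 1 - 24 ∑_{n≥1} σ₁(n) e^{2πinz}`. -/
noncomputable def E₂ (z : ℂ) : ℂ :=
  1 - 24 * ∑' n : ℕ, (ArithmeticFunction.sigma 1 (n + 1) : ℂ) *
    Complex.exp (2 * (Real.pi : ℂ) * Complex.I * ((n : ℂ) + 1) * z)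

/-- The equivariant function `h(z) = z + (6/(πi))/E₂(z)`. -/
noncomputable def h (z : ℂ) : ℂ := z + (6 / ((Real.pi : ℂ) * Complex.I)) / E₂ z

/-!
With `q = e^{-2πy}` and `t = 2πy`, the crude bound `σ₁(n+1) ≤ (n+1)² ≤ 4ⁿ` dominates
`∑ σ₁(n) qⁿ` by the geometric series `q / (1 - 4q)`. Once `t ≥ 3` we have `4(t + 1) ≤ eᵗ`,
which is exactly `1 / (1 - 4q) ≤ 1 + 1/t`; this already beats the stated bound. For the numerical
part, `y ≥ √3/2` gives `t ≥ 5.44`, hence `q ≤ 1/225`.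
-/

open ArithmeticFunction
open scoped ArithmeticFunction.sigma

lemma sigma_one_succ_le_four_pow (n : ℕ) : σ 1 (n + 1) ≤ 4 ^ n :=
  calc σ 1 (n + 1) ≤ (n + 1) ^ 2 := sigma_le_pow_succ 1 (n + 1)
    _ ≤ (2 ^ n) ^ 2 := Nat.pow_le_pow_left Nat.lt_two_pow_self 2
    _ = 4 ^ n := by rw [← pow_mul, mul_comm, pow_mul]; norm_num

lemma norm_sigma_mul_cexp_le (z : ℂ) (n : ℕ) :
    ‖(σ 1 (n + 1) : ℂ) * cexp (2 * (π : ℂ) * I * ((n : ℂ) + 1) * z)‖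
      ≤ rexp (-2 * π * z.im) * (4 * rexp (-2 * π * z.im)) ^ n := by
  have hexp : rexp (2 * (π : ℂ) * I * ((n : ℂ) + 1) * z).re
      = rexp (-2 * π * z.im) * rexp (-2 * π * z.im) ^ n := by
    rw [← Real.exp_nat_mul, ← Real.exp_add]
    congr 1
    simp only [mul_re, re_ofNat, ofReal_re, im_ofNat, ofReal_im, mul_zero, sub_zero, I_re, mul_im,
      zero_mul, add_zero, I_im, mul_one, sub_self, add_re, natCast_re, one_re, add_im, natCast_im,
      one_im, zero_add, zero_sub, neg_mul, mul_neg]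
    ring
  rw [norm_mul, Complex.norm_exp, Complex.norm_natCast, hexp, mul_pow, mul_left_comm]
  gcongr
  exact_mod_cast sigma_one_succ_le_four_pow n

lemma norm_E₂_sub_one_le (z : ℂ) (hq : 4 * rexp (-2 * π * z.im) < 1) :
    ‖E₂ z - 1‖ ≤ 24 * (rexp (-2 * π * z.im) * (1 - 4 * rexp (-2 * π * z.im))⁻¹) := by
  set q := rexp (-2 * π * z.im)
  have hgeom : HasSum (fun n : ℕ ↦ q * (4 * q) ^ n) (q * (1 - 4 * q)⁻¹) :=
    (hasSum_geometric_of_lt_one (by positivity) hq).mul_left q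
  have hsub : E₂ z - 1 = -(24 * ∑' n : ℕ, (σ 1 (n + 1) : ℂ) *
      cexp (2 * (π : ℂ) * I * ((n : ℂ) + 1) * z)) := by
    rw [E₂]; ring
  rw [hsub, norm_neg, norm_mul, Complex.norm_ofNat]
  gcongr
  exact tsum_of_norm_bounded hgeom (norm_sigma_mul_cexp_le z)

lemma twenty_lt_exp_three : 20 < rexp 3 :=
  calc (20 : ℝ) < 2.7182818283 ^ 3 := by norm_num
    _ < rexp 1 ^ 3 := by gcongr; exact exp_one_gt_d9
    _ = rexp 3 := by rw [← Real.exp_nat_mul]; norm_num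

lemma four_mul_add_one_le_exp {t : ℝ} (ht : 3 ≤ t) : 4 * (t + 1) ≤ rexp t :=
  calc 4 * (t + 1) ≤ 20 * (t - 3 + 1) := by linarith
    _ ≤ rexp 3 * rexp (t - 3) := by
      gcongr
      · exact twenty_lt_exp_three.le
      · exact add_one_le_exp _
    _ = rexp t := by rw [← Real.exp_add]; ring_nf

lemma inv_one_sub_four_mul_exp_neg_le {t : ℝ} (ht : 3 ≤ t) :
    (1 - 4 * rexp (-t))⁻¹ ≤ 1 + 1 / t := by
  have hpos : 0 < rexp t := exp_pos t
  have key := four_mul_add_one_le_exp ht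
  rw [Real.exp_neg, inv_le_iff_one_le_mul₀]
  · field_simp
    nlinarith
  · rw [sub_pos, ← div_eq_mul_inv, div_lt_one hpos]
    linarith

lemma two_hundred_twenty_five_le_exp {t : ℝ} (ht : 5.44 ≤ t) : 225 ≤ rexp t :=
  calc (225 : ℝ) ≤ 2.718 ^ 5 * (1 + 0.44 + 0.44 ^ 2 / 2) := by norm_num
    _ ≤ rexp 1 ^ 5 * rexp 0.44 := by
      gcongr
      · exact exp_one_gt_d9.le.trans' (by norm_num)
      · exact quadratic_le_exp_of_nonneg (by norm_num)
    _ = rexp 5.44 := by rw [← Real.exp_nat_mul, ← Real.exp_add]; norm_num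
    _ ≤ rexp t := Real.exp_le_exp.mpr ht

lemma five_point_four_four_le_two_pi_mul {y : ℝ} (hy : √3 / 2 ≤ y) : 5.44 ≤ 2 * π * y := by
  have hsqrt : (1.732 : ℝ) ≤ √3 := Real.le_sqrt_of_sq_le (by norm_num)
  calc (5.44 : ℝ) ≤ 2 * 3.1415 * (1.732 / 2) := by norm_num
    _ ≤ 2 * π * y := by gcongr; exacts [pi_gt_d4.le, hy.trans' (by linarith)]

/-- |E₂(z) - 1| ≤ 24 e^{-2πy}(1 + 1/(2πy) + 2/(2πy)² + 2/(2πy)³) < 0.14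
for y ≥ √3/2. -/
theorem stmt_3 (z : ℂ) (hy : Real.sqrt 3 / 2 ≤ z.im) :
    ‖E₂ z - 1‖
      ≤ 24 * Real.exp (-2 * Real.pi * z.im) *
          (1 + 1 / (2 * Real.pi * z.im) + 2 / (2 * Real.pi * z.im) ^ 2 +
            2 / (2 * Real.pi * z.im) ^ 3) ∧
    24 * Real.exp (-2 * Real.pi * z.im) *
        (1 + 1 / (2 * Real.pi * z.im) + 2 / (2 * Real.pi * z.im) ^ 2 +
          2 / (2 * Real.pi * z.im) ^ 3) < 0.14 := by
  have ht := five_point_four_four_le_two_pi_mul hy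
  have hq : rexp (-2 * π * z.im) = rexp (-(2 * π * z.im)) := by congr 1; ring
  set t := 2 * π * z.im
  have ht0 : 0 < t := by linarith
  have hinv := inv_one_sub_four_mul_exp_neg_le (t := t) (by linarith)
  have hq225 : rexp (-t) ≤ 1 / 225 := by
    rw [Real.exp_neg, one_div]
    exact inv_anti₀ (by norm_num) (two_hundred_twenty_five_le_exp ht)
  have hE := norm_E₂_sub_one_le z
  rw [hq] at hE ⊢
  constructor
  · calc ‖E₂ z - 1‖ ≤ 24 * (rexp (-t) * (1 - 4 * rexp (-t))⁻¹) := hE (by linarith)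
      _ ≤ 24 * (rexp (-t) * (1 + 1 / t)) := by gcongr
      _ ≤ _ := by
          rw [← mul_assoc]
          gcongr 24 * rexp (-t) * ?_
          linarith [show 0 ≤ 2 / t ^ 2 + 2 / t ^ 3 by positivity]
  · calc 24 * rexp (-t) * (1 + 1 / t + 2 / t ^ 2 + 2 / t ^ 3)
        ≤ 24 * (1 / 225) * (1 + 1 / 5.44 + 2 / 5.44 ^ 2 + 2 / 5.44 ^ 3) := by
          gcongr
      _ < 0.14 := by norm_num
end

section
/- For every z ∈ ℍ with Im z ≥ 0.95, one has |E₂(z) - 1| ≤ 0.07; in particular E₂(z) ≠ 0 whenever Im z ≥ 0.95. -/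
open Complex Real

/-!
With `q = e^{2πiz}` and `r = |q| = e^{-2π Im z}`, the crude bounds `σ₁(n) ≤ n² ≤ n 2^{n-1}`
dominate the `q`-series termwise by `r ∑ n (2r)^{n-1} = r / (1 - 2r)²`. For `Im z ≥ 0.95` we
have `r ≤ 0.0028`, so `|E₂(z) - 1| ≤ 24 r / (1 - 2r)² < 0.07`, and then `E₂(z) ≠ 0`.
-/

open ArithmeticFunction
open scoped ArithmeticFunction.sigma

theorem norm_tsum_sigma_one_mul_pow_le {q : ℂ} (hq : 2 * ‖q‖ < 1) :
    ‖∑' n : ℕ, (σ 1 (n + 1) : ℂ) * q ^ (n + 1)‖ ≤ ‖q‖ / (1 - 2 * ‖q‖) ^ 2 := by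
  set r := ‖q‖
  have hgeom : HasSum (fun n : ℕ ↦ r * ((n + 1 : ℝ) * (2 * r) ^ n)) (r / (1 - 2 * r) ^ 2) := by
    have h := (hasSum_choose_mul_geometric_of_norm_lt_one 1 (r := 2 * r)
      (by rwa [Real.norm_of_nonneg (by positivity)])).mul_left r
    simpa [div_eq_mul_inv] using h
  refine tsum_of_norm_bounded hgeom fun n ↦ ?_
  have hsigma : (σ 1 (n + 1) : ℝ) ≤ (n + 1 : ℝ) ^ 2 := by
    exact_mod_cast sigma_le_pow_succ 1 (n + 1)
  have htwo : (n + 1 : ℝ) ≤ 2 ^ n := by exact_mod_cast Nat.lt_two_pow_self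
  calc ‖(σ 1 (n + 1) : ℂ) * q ^ (n + 1)‖ = (σ 1 (n + 1) : ℝ) * r ^ (n + 1) := by
        rw [norm_mul, norm_pow, Complex.norm_natCast]
    _ ≤ (n + 1 : ℝ) ^ 2 * r ^ (n + 1) := by gcongr
    _ ≤ (n + 1 : ℝ) * 2 ^ n * r ^ (n + 1) := by rw [sq]; gcongr
    _ = r * ((n + 1 : ℝ) * (2 * r) ^ n) := by ring

theorem E₂_eq_one_sub_tsum (z : ℂ) :
    E₂ z = 1 - 24 * ∑' n : ℕ, (σ 1 (n + 1) : ℂ) * Complex.exp (2 * π * I * z) ^ (n + 1) := by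
  simp_rw [E₂, ← Complex.exp_nat_mul]
  congr 4 with n
  push_cast
  ring_nf

theorem norm_exp_two_pi_I_mul (z : ℂ) :
    ‖Complex.exp (2 * π * I * z)‖ = Real.exp (-(2 * π * z.im)) := by
  rw [Complex.norm_exp]
  congr 1
  simp

theorem exp_neg_two_pi_mul_le {t : ℝ} (ht : 0.95 ≤ t) : Real.exp (-(2 * π * t)) ≤ 0.0028 := by
  have hexp : (363 : ℝ) ≤ Real.exp 5.9 := by
    have h6 : (2.7182818283 : ℝ) ^ 6 ≤ Real.exp 1 ^ 6 := by
      gcongr; exact Real.exp_one_gt_d9.le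
    have h01 : (0.9 : ℝ) ≤ Real.exp (-0.1) := by linarith [Real.add_one_le_exp (-0.1 : ℝ)]
    have : Real.exp 5.9 = Real.exp 1 ^ 6 * Real.exp (-0.1) := by
      rw [← Real.exp_nat_mul, ← Real.exp_add]; norm_num
    rw [this]
    nlinarith [Real.exp_pos (-0.1 : ℝ)]
  calc Real.exp (-(2 * π * t)) ≤ Real.exp (-5.9) := by
        gcongr; nlinarith [Real.pi_gt_d2]
    _ = (Real.exp 5.9)⁻¹ := Real.exp_neg _
    _ ≤ (363 : ℝ)⁻¹ := by gcongr
    _ ≤ 0.0028 := by norm_num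

theorem norm_E₂_sub_one_le_s13 {z : ℂ} (hz : 2 * Real.exp (-(2 * π * z.im)) < 1) :
    ‖E₂ z - 1‖ ≤ 24 * (Real.exp (-(2 * π * z.im)) / (1 - 2 * Real.exp (-(2 * π * z.im))) ^ 2) := by
  rw [← norm_exp_two_pi_I_mul] at hz ⊢
  rw [E₂_eq_one_sub_tsum, sub_sub_cancel_left, norm_neg, norm_mul, Complex.norm_ofNat]
  gcongr
  exact norm_tsum_sigma_one_mul_pow_le hz

/-- |E₂(z) - 1| ≤ 0.07 for Im z ≥ 0.95; in particular E₂(z) ≠ 0 there. -/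
theorem stmt_13 (z : ℂ) (hz : 0.95 ≤ z.im) :
    ‖E₂ z - 1‖ ≤ 0.07 ∧ E₂ z ≠ 0 := by
  have hr := exp_neg_two_pi_mul_le hz
  have hbound : ‖E₂ z - 1‖ ≤ 0.07 :=
    calc ‖E₂ z - 1‖ ≤ _ := norm_E₂_sub_one_le_s13 (by linarith)
      _ ≤ 24 * (0.0028 / (1 - 2 * 0.0028) ^ 2) := by gcongr
      _ ≤ 0.07 := by norm_num
  exact ⟨hbound, fun hE ↦ by norm_num [hE] at hbound⟩
end

section
/- For every z ∈ ℍ with Im z ≥ 0.95 (so that E₂(z) ≠ 0 and h is holomorphic at z), the derivative of h satisfies |h'(z) - 1| < 0.89, where h'(z) = 1 + (6i/π)·E₂'(z)/E₂(z)². -/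
open Complex Real

/-! With `q = e^{2πiz}` one has `h'(z) - 1 = (6i/π) E₂'(z)/E₂(z)²` and
`E₂'(z) = -48πi ∑ n σ₁(n) qⁿ`, so `|h'(z) - 1| ≤ 288 S / (1 - 24 S)²` with
`S = ∑ n σ₁(n) |q|ⁿ`. For `Im z ≥ 0.95` we have `|q| ≤ 1/390`, which gives `S ≤ 0.002613` and
`|h'(z) - 1| ≤ 0.857`.
Holomorphy of the `q`-series and termwise differentiation follow from the uniform bound
`n σ₁(n) ≤ n³` on half-planes `Im z > y > 0`. -/

open ArithmeticFunction
open scoped ArithmeticFunction.sigma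

noncomputable def sigmaMajorant (r : ℝ) (n : ℕ) : ℝ :=
  (((n + 1) * σ 1 (n + 1) : ℕ) : ℝ) * r ^ (n + 1)

lemma mul_sigma_one_le_pow_three (n : ℕ) : n * σ 1 n ≤ n ^ 3 := by
  calc n * σ 1 n ≤ n * n ^ 2 := Nat.mul_le_mul_left n (sigma_le_pow_succ 1 n)
    _ = n ^ 3 := by ring

lemma mul_sigma_one_le_eight_pow (n : ℕ) : n * σ 1 n ≤ 8 ^ n :=
  calc n * σ 1 n ≤ n ^ 3 := mul_sigma_one_le_pow_three n
    _ ≤ (2 ^ n) ^ 3 := Nat.pow_le_pow_left n.lt_two_pow_self.le 3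
    _ = 8 ^ n := by rw [← pow_mul, mul_comm, pow_mul]; norm_num

section sigmaMajorant

variable {r s : ℝ}

lemma sigmaMajorant_nonneg (hr : 0 ≤ r) (n : ℕ) : 0 ≤ sigmaMajorant r n := by
  unfold sigmaMajorant; positivity

lemma sigmaMajorant_mono (hr : 0 ≤ r) (hrs : r ≤ s) (n : ℕ) :
    sigmaMajorant r n ≤ sigmaMajorant s n := by
  unfold sigmaMajorant; gcongr

lemma summable_sigmaMajorant (hr₀ : 0 ≤ r) (hr₁ : r < 1) : Summable (sigmaMajorant r) := by
  have hcube : Summable fun n : ℕ => ((n + 1 : ℕ) : ℝ) ^ 3 * r ^ (n + 1) :=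
    (summable_nat_add_iff (f := fun n : ℕ => (n : ℝ) ^ 3 * r ^ n) 1).2 <|
      summable_pow_mul_geometric_of_norm_lt_one 3 (by rwa [Real.norm_of_nonneg hr₀])
  refine hcube.of_nonneg_of_le (sigmaMajorant_nonneg hr₀) fun n => ?_
  unfold sigmaMajorant
  gcongr
  exact_mod_cast mul_sigma_one_le_pow_three (n + 1)

lemma sigmaMajorant_le_eight_mul_pow (hr : 0 ≤ r) (n : ℕ) :
    sigmaMajorant r n ≤ (8 * r) ^ (n + 1) := by
  rw [sigmaMajorant, mul_pow]
  gcongr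
  exact_mod_cast mul_sigma_one_le_eight_pow (n + 1)

lemma summable_sigmaMajorant_exp {y : ℝ} (hy : 0 < y) :
    Summable (sigmaMajorant (rexp (-(2 * π * y)))) :=
  summable_sigmaMajorant (by positivity) (Real.exp_lt_one_iff.2 (by nlinarith [Real.pi_pos]))

/-- Only the first two terms are computed exactly; from the third on `n σ₁(n) ≤ 8ⁿ`. -/
lemma tsum_sigmaMajorant_le (hr₀ : 0 ≤ r) (hr : r ≤ 1 / 390) :
    ∑' n, sigmaMajorant r n ≤ 0.002613 := by
  set ρ : ℝ := 1 / 390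
  have hρ : Summable (sigmaMajorant ρ) := summable_sigmaMajorant (by norm_num) (by norm_num)
  have hgeom : HasSum (fun n : ℕ => (8 * ρ) ^ 3 * (8 * ρ) ^ n) ((8 * ρ) ^ 3 * (1 - 8 * ρ)⁻¹) :=
    (hasSum_geometric_of_lt_one (by norm_num) (by norm_num)).mul_left _
  calc ∑' n, sigmaMajorant r n ≤ ∑' n, sigmaMajorant ρ n :=
        (summable_sigmaMajorant hr₀ (hr.trans_lt (by norm_num))).tsum_le_tsum
          (sigmaMajorant_mono hr₀ hr) hρ
    _ = sigmaMajorant ρ 0 + sigmaMajorant ρ 1 + ∑' n, sigmaMajorant ρ (n + 2) := by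
        rw [← hρ.sum_add_tsum_nat_add 2, Finset.sum_range_succ, Finset.sum_range_one]
    _ ≤ sigmaMajorant ρ 0 + sigmaMajorant ρ 1 + (8 * ρ) ^ 3 * (1 - 8 * ρ)⁻¹ := by
        gcongr
        exact hasSum_le
          (fun n => (sigmaMajorant_le_eight_mul_pow (by norm_num) (n + 2)).trans_eq (by ring))
          ((summable_nat_add_iff 2).2 hρ).hasSum hgeom
    _ ≤ 0.002613 := by
        have hσ₁ : σ 1 1 = 1 := by decide
        have hσ₂ : σ 1 2 = 3 := by decide
        simp only [sigmaMajorant, hσ₁, hσ₂, ρ]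
        norm_num

end sigmaMajorant

noncomputable def e2Term (n : ℕ) (w : ℂ) : ℂ :=
  (σ 1 (n + 1) : ℂ) * cexp (2 * π * I * ((n : ℂ) + 1) * w)

lemma E₂_eq_one_sub_tsum_s15 (w : ℂ) : E₂ w = 1 - 24 * ∑' n, e2Term n w := rfl

lemma norm_e2Term (n : ℕ) (w : ℂ) :
    ‖e2Term n w‖ = σ 1 (n + 1) * rexp (-(2 * π * w.im)) ^ (n + 1) := by
  have hre : (2 * π * I * ((n : ℂ) + 1) * w).re = (n + 1 : ℕ) * -(2 * π * w.im) := by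
    simp [mul_re, mul_im]; ring
  rw [e2Term, norm_mul, Complex.norm_natCast, Complex.norm_exp, hre, Real.exp_nat_mul]

lemma norm_e2Term_le (n : ℕ) (w : ℂ) :
    ‖e2Term n w‖ ≤ sigmaMajorant (rexp (-(2 * π * w.im))) n := by
  rw [norm_e2Term, sigmaMajorant]
  gcongr
  exact_mod_cast Nat.le_mul_of_pos_left _ n.succ_pos

lemma norm_e2Term_le_of_lt_im {y : ℝ} {w : ℂ} (hw : y < w.im) (n : ℕ) :
    ‖e2Term n w‖ ≤ sigmaMajorant (rexp (-(2 * π * y))) n :=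
  (norm_e2Term_le n w).trans <| sigmaMajorant_mono (by positivity)
    (Real.exp_le_exp.2 (by nlinarith [Real.pi_pos])) n

lemma hasDerivAt_e2Term (n : ℕ) (w : ℂ) :
    HasDerivAt (e2Term n) (2 * π * I * (n + 1) * e2Term n w) w := by
  have hlin :
      HasDerivAt (fun v : ℂ => 2 * π * I * ((n : ℂ) + 1) * v) (2 * π * I * (n + 1)) w := by
    simpa using (hasDerivAt_id w).const_mul (2 * π * I * ((n : ℂ) + 1))
  exact (hlin.cexp.const_mul _).congr_deriv (by rw [e2Term]; ring)

lemma norm_deriv_e2Term_le (n : ℕ) (w : ℂ) :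
    ‖2 * π * I * (n + 1) * e2Term n w‖ ≤ 2 * π * sigmaMajorant (rexp (-(2 * π * w.im))) n := by
  have hnorm : ‖2 * π * I * ((n : ℂ) + 1)‖ = 2 * π * (n + 1) := by
    rw [show (n : ℂ) + 1 = ((n + 1 : ℕ) : ℂ) by push_cast; ring]
    simp only [norm_mul, Complex.norm_ofNat, Complex.norm_real, Complex.norm_I,
      Complex.norm_natCast, Real.norm_of_nonneg Real.pi_pos.le]
    push_cast
    ring
  rw [norm_mul, hnorm, norm_e2Term, sigmaMajorant]
  exact le_of_eq (by push_cast; ring)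

section Holomorphy

variable {w : ℂ}

lemma differentiableAt_tsum_e2Term (hw : 0 < w.im) :
    DifferentiableAt ℂ (fun v => ∑' n, e2Term n v) w := by
  have hU : IsOpen {v : ℂ | w.im / 2 < v.im} := isOpen_lt continuous_const continuous_im
  refine (differentiableOn_tsum_of_summable_norm (summable_sigmaMajorant_exp (half_pos hw))
    (fun n => (fun v _ => (hasDerivAt_e2Term n v).differentiableAt.differentiableWithinAt)) hU
    (fun n v hv => norm_e2Term_le_of_lt_im hv n)).differentiableAt (hU.mem_nhds ?_)
  show w.im / 2 < w.im; linarith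

lemma hasSum_deriv_tsum_e2Term (hw : 0 < w.im) :
    HasSum (fun n => 2 * π * I * (n + 1) * e2Term n w) (deriv (fun v => ∑' n, e2Term n v) w) := by
  have hU : IsOpen {v : ℂ | w.im / 2 < v.im} := isOpen_lt continuous_const continuous_im
  simpa only [(hasDerivAt_e2Term _ w).deriv] using
    hasSum_deriv_of_summable_norm (summable_sigmaMajorant_exp (half_pos hw))
      (fun n => (fun v _ => (hasDerivAt_e2Term n v).differentiableAt.differentiableWithinAt)) hU
      (fun n v hv => norm_e2Term_le_of_lt_im hv n) (show w.im / 2 < w.im by linarith)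

lemma hasDerivAt_E₂ (hw : 0 < w.im) :
    HasDerivAt E₂ (-(24 * ∑' n, 2 * π * I * (n + 1) * e2Term n w)) w := by
  rw [(hasSum_deriv_tsum_e2Term hw).tsum_eq]
  exact ((differentiableAt_tsum_e2Term hw).hasDerivAt.const_mul 24).const_sub 1

lemma norm_E₂_sub_one_le_s15 (hw : 0 < w.im) :
    ‖E₂ w - 1‖ ≤ 24 * ∑' n, sigmaMajorant (rexp (-(2 * π * w.im))) n := by
  rw [E₂_eq_one_sub_tsum_s15, sub_sub_cancel_left, norm_neg, norm_mul, Complex.norm_ofNat]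
  gcongr
  exact tsum_of_norm_bounded (summable_sigmaMajorant_exp hw).hasSum (norm_e2Term_le · w)

lemma norm_deriv_E₂_le (hw : 0 < w.im) :
    ‖deriv E₂ w‖ ≤ 48 * π * ∑' n, sigmaMajorant (rexp (-(2 * π * w.im))) n := by
  rw [(hasDerivAt_E₂ hw).deriv, norm_neg, norm_mul, Complex.norm_ofNat,
    show 48 * π * ∑' n, sigmaMajorant (rexp (-(2 * π * w.im))) n
      = 24 * ∑' n, 2 * π * sigmaMajorant (rexp (-(2 * π * w.im))) n by rw [tsum_mul_left]; ring]
  gcongr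
  exact tsum_of_norm_bounded ((summable_sigmaMajorant_exp hw).mul_left _).hasSum
    (norm_deriv_e2Term_le · w)

end Holomorphy

lemma exp_neg_two_pi_mul_le_s15 {y : ℝ} (hy : 0.95 ≤ y) : rexp (-(2 * π * y)) ≤ 1 / 390 := by
  have he6 : 2.7182818283 ^ 6 ≤ rexp 6 := by
    simpa [Real.exp_one_pow] using pow_le_pow_left₀ (by norm_num) Real.exp_one_gt_d9.le 6
  have h390 : 390 ≤ rexp (2 * π * y) := calc
    (390 : ℝ) ≤ 2.7182818283 ^ 6 * (-0.031 + 1) := by norm_num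
    _ ≤ rexp 6 * rexp (-0.031) := by gcongr; exact Real.add_one_le_exp _
    _ = rexp 5.969 := by rw [← Real.exp_add]; norm_num
    _ ≤ rexp (2 * π * y) := Real.exp_le_exp.2 (by nlinarith [Real.pi_gt_d6])
  rw [Real.exp_neg, one_div]
  exact inv_anti₀ (by norm_num) h390

lemma hasDerivAt_h {w : ℂ} (hd : DifferentiableAt ℂ E₂ w) (h0 : E₂ w ≠ 0) :
    HasDerivAt h (1 + 6 * I / π * deriv E₂ w / E₂ w ^ 2) w := by
  have hc : (6 : ℂ) / (π * I) = -(6 * I / π) := by rw [div_mul_eq_div_div, div_I]; ring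
  exact ((hasDerivAt_id w).add ((hasDerivAt_const w _).div hd.hasDerivAt h0)).congr_deriv
    (by rw [hc]; ring)

lemma norm_six_I_div_pi_mul_div_sq (a b : ℂ) :
    ‖6 * I / π * a / b ^ 2‖ = 6 / π * ‖a‖ / ‖b‖ ^ 2 := by
  simp [Real.norm_of_nonneg Real.pi_pos.le]

/-- |h'(z) - 1| < 0.89 for Im z ≥ 0.95, where
h'(z) = 1 + (6i/π) E₂'(z)/E₂(z)². -/
theorem stmt_15 (z : ℂ) (hz : 0.95 ≤ z.im) :
    deriv h z = 1 + (6 * Complex.I / (Real.pi : ℂ)) * deriv E₂ z / (E₂ z) ^ 2 ∧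
      ‖deriv h z - 1‖ < 0.89 := by
  have hz₀ : 0 < z.im := by linarith
  have hS := tsum_sigmaMajorant_le (by positivity) (exp_neg_two_pi_mul_le_s15 hz)
  have hE₂ : 0.937 ≤ ‖E₂ z‖ := by
    have h₁ := norm_sub_norm_le 1 (E₂ z)
    rw [norm_one, norm_sub_rev] at h₁
    linarith [norm_E₂_sub_one_le_s15 hz₀]
  have hderiv :=
    (hasDerivAt_h (hasDerivAt_E₂ hz₀).differentiableAt (norm_pos_iff.1 (by linarith))).deriv
  refine ⟨hderiv, ?_⟩
  calc ‖deriv h z - 1‖ = 6 / π * ‖deriv E₂ z‖ / ‖E₂ z‖ ^ 2 := by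
        rw [hderiv, add_sub_cancel_left, norm_six_I_div_pi_mul_div_sq]
    _ ≤ 6 / π * (48 * π * 0.002613) / 0.937 ^ 2 := by
        gcongr
        exact (norm_deriv_E₂_le hz₀).trans (by gcongr)
    _ < 0.89 := by
        rw [show 6 / π * (48 * π * 0.002613) = 288 * 0.002613 by field_simp; ring]
        norm_num
end
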